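/- arXiv:1404.7527 — 8 statements merged into one kernel-verified Lean document; each statement's English description precedes it below -/
import Mathlib

section
/- The learning restriction Caut (caution) is delayable. -/
def content (T : ℕ → Option ℕ) : Set ℕ := {x | ∃ n, T n = some x}

def contentUpto (T : ℕ → Option ℕ) (k : ℕ) : Set ℕ := {x | ∃ n < k, T n = some x}

def Rvec (r : ℕ → ℕ) : Prop := Monotone r ∧ ∀ m, ∀ᶠ n in Filter.atTop, r n ≥ m

def Delayable (δ : (ℕ → ℕ) → (ℕ → Option ℕ) → Prop) : Prop :=
  ∀ (T T' : ℕ → Option ℕ) (p : ℕ → ℕ) (r : ℕ → ℕ),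
    content T = content T' → Rvec r → δ p T →
    (∀ n, contentUpto T (r n) ⊆ contentUpto T' n) → δ (p ∘ r) T'

/-- Cautious learning restriction. -/
def Caut (W : ℕ → Set ℕ) (p : ℕ → ℕ) (_T : ℕ → Option ℕ) : Prop :=
  ∀ i j, W (p i) ⊂ W (p j) → i < j

theorem caut_delayable (W : ℕ → Set ℕ) : Delayable (Caut W) := by
  intro T T' p r _ hr hc _ i j hij
  have := hc (r i) (r j) hij
  by_contra h
  exact absurd (lt_of_le_of_lt (hr.1 (Nat.le_of_not_lt h)) this) (lt_irrefl _)
end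

section
/- If a hypothesis sequence p on text T has the property that with every mind change, there is an element of the target included in the new conjecture and in all future conjectures but not included in the old conjecture, then p satisfies both Caut and SDec on T. -/
theorem witness_implies_caut_sdec (W : ℕ → Set ℕ) (T : ℕ → Option ℕ) (p : ℕ → ℕ)
    (hwit : ∀ i j, i < j → p i ≠ p j →
      ∃ x ℓ, i < ℓ ∧ ℓ ≤ j ∧ x ∉ W (p i) ∧ ∀ k ≥ j, x ∈ W (p k)) :
    (∀ i j, W (p i) ⊂ W (p j) → i < j) ∧
    (∀ i j k, i ≤ j → j ≤ k → W (p i) = W (p k) → p j = p i) := by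
  constructor
  · intro i j hsub
    by_contra h
    push_neg at h
    rcases eq_or_lt_of_le h with he | hlt
    · exact hsub.ne (by rw [he])
    · by_cases hp : p j = p i
      · exact hsub.ne (by rw [hp])
      · obtain ⟨x, ℓ, _, _, hxnot, hall⟩ := hwit j i hlt hp
        exact hxnot (hsub.subset (hall i le_rfl))
  · intro i j k hij hjk heq
    by_contra hp
    rcases eq_or_lt_of_le hij with he | hlt
    · exact hp (by rw [he])
    · obtain ⟨x, ℓ, _, _, hxnot, hall⟩ := hwit i j hlt (fun h => hp h.symm)
      exact hxnot (heq ▸ hall k hjk)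
end

section
/- Given a total learner h and an injective padding function pad : ℕ × Seq → ℕ, the learner h' defined by h'(σ) = pad(h(σ), σ) if σ = ∅ or h(σ) ≠ h(σ⁻), and h'(σ) = h'(σ⁻) otherwise (where σ⁻ is σ with its last element removed), produces on every text a syntactically decisive sequence of hypotheses, and h' makes a mind change at stage n only if h does. -/
/-- finite sequences over ℕ ∪ {#} -/
abbrev FSeq := List (Option ℕ)

/-- initial segment of a text, as a finite sequence -/
def initSeg (T : ℕ → Option ℕ) (n : ℕ) : FSeq := (List.range n).map T

def SynDec (p : ℕ → ℕ) : Prop :=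
  ∀ i j k, i ≤ j → j ≤ k → p i = p k → p j = p i

lemma initSeg_length (T : ℕ → Option ℕ) (n : ℕ) : (initSeg T n).length = n := by
  simp [initSeg]

lemma initSeg_dropLast (T : ℕ → Option ℕ) (n : ℕ) :
    (initSeg T (n + 1)).dropLast = initSeg T n := by
  simp [initSeg, List.range_succ]

lemma initSeg_ne_nil (T : ℕ → Option ℕ) (n : ℕ) : initSeg T (n + 1) ≠ [] := by
  intro hc
  have := initSeg_length T (n + 1)
  rw [hc] at this
  simp at this

theorem pad_learner_syndec (h h' : FSeq → ℕ) (pad : ℕ × FSeq → ℕ)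
    (hpad : Function.Injective pad)
    (hdef₁ : ∀ σ : FSeq, (σ = [] ∨ h σ ≠ h σ.dropLast) → h' σ = pad (h σ, σ))
    (hdef₂ : ∀ σ : FSeq, (σ ≠ [] ∧ h σ = h σ.dropLast) → h' σ = h' σ.dropLast) :
    ∀ T : ℕ → Option ℕ,
      SynDec (fun n => h' (initSeg T n)) ∧
      ∀ n, h' (initSeg T n) ≠ h' (initSeg T (n + 1)) →
        h (initSeg T n) ≠ h (initSeg T (n + 1)) := by
  intro T
  set p : ℕ → ℕ := fun n => h' (initSeg T n) with hp
  -- Lemma A: every value of p is a pad of an earlier initial segment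
  have lemA : ∀ n, ∃ m, m ≤ n ∧ p n = pad (h (initSeg T m), initSeg T m) := by
    intro n
    induction n with
    | zero =>
        refine ⟨0, le_refl 0, ?_⟩
        simp only [hp]
        exact hdef₁ _ (Or.inl (by simp [initSeg]))
    | succ n ih =>
        by_cases hc : h (initSeg T (n + 1)) = h (initSeg T n)
        · obtain ⟨m, hm, hpm⟩ := ih
          refine ⟨m, hm.trans (Nat.le_succ n), ?_⟩
          have := hdef₂ (initSeg T (n + 1))
            ⟨initSeg_ne_nil T n, by rw [initSeg_dropLast]; exact hc⟩
          simp only [hp]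
          rw [this, initSeg_dropLast]
          exact hpm
        · refine ⟨n + 1, le_refl _, ?_⟩
          simp only [hp]
          exact hdef₁ _ (Or.inr (by rw [initSeg_dropLast]; exact hc))
  -- Lemma B: if p i = p (n+1) with i ≤ n, then p (n+1) = p n
  have lemB : ∀ i n, i ≤ n → p i = p (n + 1) → p (n + 1) = p n := by
    intro i n hin hpi
    by_cases hc : h (initSeg T (n + 1)) = h (initSeg T n)
    · have := hdef₂ (initSeg T (n + 1))
        ⟨initSeg_ne_nil T n, by rw [initSeg_dropLast]; exact hc⟩
      simp only [hp]
      rw [this, initSeg_dropLast]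
    · exfalso
      have h1 : p (n + 1) = pad (h (initSeg T (n + 1)), initSeg T (n + 1)) :=
        hdef₁ _ (Or.inr (by rw [initSeg_dropLast]; exact hc))
      obtain ⟨m, hm, hpm⟩ := lemA i
      have : pad (h (initSeg T m), initSeg T m)
           = pad (h (initSeg T (n + 1)), initSeg T (n + 1)) := by
        rw [← hpm, ← h1, hpi]
      have hseq : initSeg T m = initSeg T (n + 1) := congrArg Prod.snd (hpad this)
      have hlen := congrArg List.length hseq
      rw [initSeg_length, initSeg_length] at hlen
      omega
  constructor
  · intro i j k hij hjk hik
    -- prove ∀ j, i ≤ j → j ≤ k → p j = p k, by downward induction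
    have key : ∀ d j, j + d = k → i ≤ j → p j = p k := by
      intro d
      induction d with
      | zero => intro j hj _; have : j = k := by omega
                rw [this]
      | succ d ih =>
          intro j hj hij'
          have hjk' : j + 1 + d = k := by omega
          have h1 : p (j + 1) = p k := ih (j + 1) hjk' (by omega)
          have h2 : p i = p (j + 1) := by rw [h1]; exact hik
          have := lemB i j hij' h2
          rw [this] at h1
          exact h1
    have hk : ∀ d j, j + d = k → i ≤ j → p j = p k := key
    have : p j = p k := hk (k - j) j (by omega) hij
    exact this.trans hik.symm
  · intro n hne hc
    apply hne
    have := hdef₂ (initSeg T (n + 1))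
      ⟨initSeg_ne_nil T n, by rw [initSeg_dropLast]; exact hc.symm⟩
    rw [this, initSeg_dropLast]
end

section
/- Every learner Ex-learning a language L has a locking sequence on L: if for every text T for L the hypothesis sequence n ↦ h(T[n]) converges to an index for L, then there exists a finite sequence σ of elements of L such that W_{h(σ)} = L and for every finite sequence τ of elements of L, h(σ ⧺ τ) = h(σ). -/
/-- content of a finite sequence -/
def lcontent (σ : FSeq) : Set ℕ := {x | some x ∈ σ}

/-- h Ex-learns L -/
def ExLearns (W : ℕ → Set ℕ) (h : FSeq → ℕ) (L : Set ℕ) : Prop :=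
  ∀ T : ℕ → Option ℕ, content T = L →
    ∃ n₀, (∀ n ≥ n₀, h (initSeg T n) = h (initSeg T n₀)) ∧ W (h (initSeg T n₀)) = L

open Classical

/-- extension changing hypothesis, if any -/
noncomputable def lsExt (h : FSeq → ℕ) (L : Set ℕ) (σ : FSeq) : FSeq :=
  if hx : ∃ τ, lcontent τ ⊆ L ∧ h (σ ++ τ) ≠ h σ then hx.choose else []

lemma lsExt_sub (h : FSeq → ℕ) (L : Set ℕ) (σ : FSeq) : lcontent (lsExt h L σ) ⊆ L := by
  unfold lsExt
  split
  · next hx => exact hx.choose_spec.1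
  · intro x hx; exact absurd hx (by simp [lcontent])

lemma lsExt_spec (h : FSeq → ℕ) (L : Set ℕ) (σ : FSeq)
    (hx : ∃ τ, lcontent τ ⊆ L ∧ h (σ ++ τ) ≠ h σ) : h (σ ++ lsExt h L σ) ≠ h σ := by
  unfold lsExt
  rw [dif_pos hx]
  exact hx.choose_spec.2

/-- enumeration of L -/
noncomputable def lsEnum (L : Set ℕ) (n : ℕ) : Option ℕ :=
  if n ∈ L then some n else none

/-- stage construction -/
noncomputable def lsSig (h : FSeq → ℕ) (L : Set ℕ) : ℕ → FSeq
  | 0 => []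
  | k + 1 => lsSig h L k ++ lsExt h L (lsSig h L k) ++ [lsEnum L k]

lemma lsSig_sub (h : FSeq → ℕ) (L : Set ℕ) : ∀ k, lcontent (lsSig h L k) ⊆ L := by
  intro k
  induction k with
  | zero => intro x hx; exact absurd hx (by simp [lcontent, lsSig])
  | succ k ih =>
    intro x hx
    simp only [lcontent, lsSig, Set.mem_setOf_eq, List.mem_append, List.mem_singleton] at hx
    rcases hx with (hx | hx) | hx
    · exact ih hx
    · exact lsExt_sub h L _ hx
    · unfold lsEnum at hx
      split at hx
      · next hm => cases hx; simpa using hm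
      · cases hx

lemma lsSig_len (h : FSeq → ℕ) (L : Set ℕ) : ∀ k, k ≤ (lsSig h L k).length := by
  intro k
  induction k with
  | zero => simp
  | succ k ih =>
    simp only [lsSig, List.length_append, List.length_singleton]
    omega

lemma lsSig_prefix (h : FSeq → ℕ) (L : Set ℕ) : ∀ {k m}, k ≤ m → lsSig h L k <+: lsSig h L m := by
  intro k m hkm
  induction m with
  | zero => simp_all
  | succ m ih =>
    rcases Nat.lt_or_ge k (m + 1) with hk | hk
    · have := ih (by omega)
      refine this.trans ?_
      simp only [lsSig]
      exact ((List.prefix_append _ _).trans (List.prefix_append _ _))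
    · have : k = m + 1 := by omega
      subst this
      exact List.prefix_refl _

/-- the text -/
noncomputable def lsT (h : FSeq → ℕ) (L : Set ℕ) (n : ℕ) : Option ℕ :=
  (lsSig h L (n + 1)).getD n none

lemma lsT_eq (h : FSeq → ℕ) (L : Set ℕ) {m n : ℕ} (hn : n < (lsSig h L m).length) :
    lsT h L n = (lsSig h L m)[n] := by
  have hn1 : n < (lsSig h L (n + 1)).length := lt_of_lt_of_le (Nat.lt_succ_self n) (lsSig_len h L (n + 1))
  unfold lsT
  rw [List.getD_eq_getElem _ _ hn1]
  rcases Nat.le_total (n + 1) m with hle | hle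
  · exact (lsSig_prefix h L hle).getElem hn1
  · exact ((lsSig_prefix h L hle).getElem hn).symm

lemma initSeg_take (h : FSeq → ℕ) (L : Set ℕ) {m n : ℕ} (hn : n ≤ (lsSig h L m).length) :
    initSeg (lsT h L) n = (lsSig h L m).take n := by
  apply List.ext_getElem
  · simp [initSeg, hn]
  · intro i h1 h2
    simp only [initSeg, List.getElem_map, List.getElem_range, List.getElem_take]
    have hi : i < n := by simpa [initSeg] using h1
    exact lsT_eq h L (lt_of_lt_of_le hi hn)

lemma initSeg_of_prefix (h : FSeq → ℕ) (L : Set ℕ) {m : ℕ} {ρ : FSeq}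
    (hp : ρ <+: lsSig h L m) : initSeg (lsT h L) ρ.length = ρ := by
  rw [initSeg_take h L hp.length_le, ← List.prefix_iff_eq_take.mp hp]

lemma content_lsT (h : FSeq → ℕ) (L : Set ℕ) : content (lsT h L) = L := by
  ext x
  constructor
  · rintro ⟨n, hn⟩
    have hn1 : n < (lsSig h L (n + 1)).length :=
      lt_of_lt_of_le (Nat.lt_succ_self n) (lsSig_len h L (n + 1))
    have : lsT h L n = (lsSig h L (n + 1))[n] := lsT_eq h L hn1
    rw [this] at hn
    have hmem : some x ∈ lsSig h L (n + 1) := hn ▸ List.getElem_mem hn1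
    exact lsSig_sub h L (n + 1) hmem
  · intro hx
    have hmem : some x ∈ lsSig h L (x + 1) := by
      simp only [lsSig, List.mem_append, List.mem_singleton]
      right
      simp [lsEnum, hx]
    obtain ⟨i, hi, hieq⟩ := List.getElem_of_mem hmem
    exact ⟨i, (lsT_eq h L hi).trans hieq⟩

/-- Blum–Blum locking sequence lemma. -/
theorem locking_sequence (W : ℕ → Set ℕ) (h : FSeq → ℕ) (L : Set ℕ)
    (hlearn : ExLearns W h L) :
    ∃ σ : FSeq, lcontent σ ⊆ L ∧ W (h σ) = L ∧
      ∀ τ : FSeq, lcontent τ ⊆ L → h (σ ++ τ) = h σ := by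
  by_contra hcon
  push_neg at hcon
  obtain ⟨n₀, hconv, hW⟩ := hlearn (lsT h L) (content_lsT h L)
  set σ : FSeq := lsSig h L n₀ with hσ
  have hlen : n₀ ≤ σ.length := lsSig_len h L n₀
  have hσinit : initSeg (lsT h L) σ.length = σ :=
    initSeg_of_prefix h L (List.prefix_refl σ)
  have h1 : h σ = h (initSeg (lsT h L) n₀) := by
    rw [← hσinit]; exact hconv σ.length hlen
  have hWσ : W (h σ) = L := by rw [h1]; exact hW
  obtain ⟨τ, hτL, hne⟩ := hcon σ (lsSig_sub h L n₀) hWσ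
  have hx : ∃ τ, lcontent τ ⊆ L ∧ h (σ ++ τ) ≠ h σ := ⟨τ, hτL, hne⟩
  have hne2 : h (σ ++ lsExt h L σ) ≠ h σ := lsExt_spec h L σ hx
  set ρ : FSeq := σ ++ lsExt h L σ with hρ
  have hρpre : ρ <+: lsSig h L (n₀ + 1) := by
    show σ ++ lsExt h L σ <+: lsSig h L (n₀ + 1)
    simp only [lsSig]
    exact List.prefix_append _ _
  have hρinit : initSeg (lsT h L) ρ.length = ρ := initSeg_of_prefix h L hρpre
  have hρlen : n₀ ≤ ρ.length := le_trans hlen (by simp [hρ])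
  have : h ρ = h (initSeg (lsT h L) n₀) := by
    rw [← hρinit]; exact hconv ρ.length hρlen
  exact hne2 (this.trans h1.symm)
end

section
/- The class 𝓛 = {2ℕ} ∪ {L_k : k ∈ ℕ}, where L_k = {0,2,4,…,2k} ∪ {2k+1}, is not TxtGSMonEx-learnable: for any learner h that Ex-learns 2ℕ and all L_k, there exist a language L' ∈ 𝓛, a text T for L' and indices i < j with W_{h(T[i])} ⊄ W_{h(T[j])}. -/
/-- L_k = {0,2,…,2k} ∪ {2k+1} -/
def Lk (k : ℕ) : Set ℕ := {x | (∃ m ≤ k, x = 2 * m) ∨ x = 2 * k + 1}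

def EvenSet : Set ℕ := {x | ∃ m, x = 2 * m}

/-- 𝓛 = {2ℕ} ∪ {L_k : k ∈ ℕ} is not TxtGSMonEx-learnable. -/
theorem not_smon_learnable (W : ℕ → Set ℕ) (h : FSeq → ℕ)
    (hlearn : ExLearns W h EvenSet ∧ ∀ k, ExLearns W h (Lk k)) :
    ∃ L' ∈ insert EvenSet {L | ∃ k, L = Lk k},
      ∃ T : ℕ → Option ℕ, content T = L' ∧
        ∃ i j, i < j ∧ ¬ W (h (initSeg T i)) ⊆ W (h (initSeg T j)) := by
  obtain ⟨hEven, hLk⟩ := hlearn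
  -- text for EvenSet
  set T : ℕ → Option ℕ := fun n => some (2 * n) with hT
  have hTc : content T = EvenSet := by
    ext x
    constructor
    · rintro ⟨n, hn⟩
      simp only [hT, Option.some.injEq] at hn
      exact ⟨n, hn.symm⟩
    · rintro ⟨m, rfl⟩
      exact ⟨m, rfl⟩
  obtain ⟨n₀, hconv, hW⟩ := hEven T hTc
  -- text for L_{n₀}
  set T' : ℕ → Option ℕ := fun n =>
    some (if n ≤ n₀ then 2 * n else if n = n₀ + 1 then 2 * n₀ + 1 else 0) with hT'
  have hT'c : content T' = Lk n₀ := by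
    ext x
    constructor
    · rintro ⟨n, hn⟩
      simp only [hT', Option.some.injEq] at hn
      by_cases h1 : n ≤ n₀
      · simp [h1] at hn; exact Or.inl ⟨n, h1, by omega⟩
      · by_cases h2 : n = n₀ + 1
        · simp [h1, h2] at hn; exact Or.inr hn.symm
        · simp [h1, h2] at hn; exact Or.inl ⟨0, by omega, by omega⟩
    · rintro (⟨m, hm, rfl⟩ | rfl)
      · exact ⟨m, by simp [hT', hm]⟩
      · exact ⟨n₀ + 1, by simp [hT']⟩
  obtain ⟨n₁, hconv', hW'⟩ := hLk n₀ T' hT'c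
  refine ⟨Lk n₀, Or.inr ⟨n₀, rfl⟩, T', hT'c, n₀, max (n₀ + 1) n₁, ?_, ?_⟩
  · exact lt_of_lt_of_le (Nat.lt_succ_self n₀) (le_max_left _ _)
  · have hseg : initSeg T' n₀ = initSeg T n₀ := by
      unfold initSeg
      apply List.map_congr_left
      intro n hn
      rw [List.mem_range] at hn
      simp [hT', hT, Nat.le_of_lt hn]
    have hWi : W (h (initSeg T' n₀)) = EvenSet := by rw [hseg]; exact hW
    have hWj : W (h (initSeg T' (max (n₀ + 1) n₁))) = Lk n₀ := by
      rw [hconv' _ (le_max_right _ _)]; exact hW'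
    rw [hWi, hWj]
    intro hsub
    have := hsub ⟨n₀ + 1, rfl⟩
    rcases this with ⟨m, hm, he⟩ | he <;> omega
end

section
/- If a class of languages 𝓛 is dense (contains a superset of every finite set) and a learner h monotonically Gold-Ex-learns 𝓛, then h is in fact strongly monotone on every text for every member of 𝓛. -/
/-- h Mon-Ex-learns the class 𝓛. -/
def MonExLearns (W : ℕ → Set ℕ) (h : FSeq → ℕ) (𝓛 : Set (Set ℕ)) : Prop :=
  ∀ L ∈ 𝓛, ∀ T : ℕ → Option ℕ, content T = L →
    (∃ n₀, (∀ n ≥ n₀, h (initSeg T n) = h (initSeg T n₀)) ∧ W (h (initSeg T n₀)) = L) ∧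
    (∀ i j, i < j → W (h (initSeg T i)) ∩ L ⊆ W (h (initSeg T j)) ∩ L)

theorem dense_mon_implies_smon (W : ℕ → Set ℕ) (h : FSeq → ℕ) (𝓛 : Set (Set ℕ))
    (hdense : ∀ D : Finset ℕ, ∃ L ∈ 𝓛, ↑D ⊆ L)
    (hlearn : MonExLearns W h 𝓛) :
    ∀ L ∈ 𝓛, ∀ T : ℕ → Option ℕ, content T = L →
      ∀ i j, i < j → W (h (initSeg T i)) ⊆ W (h (initSeg T j)) := by
  classical
  intro L hL T hT i j hij x hx
  -- finite set: x together with all data in T[0..j)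
  set D : Finset ℕ := insert x ((initSeg T j).filterMap id).toFinset with hD
  obtain ⟨L', hL'mem, hDL'⟩ := hdense D
  have hxL' : x ∈ L' := hDL' (by simp [hD])
  have hseg : ∀ n, T n = some x → n < j → x ∈ L' := by
    intro n hn hnj
    apply hDL'
    simp only [hD, Finset.coe_insert, Set.mem_insert_iff, Finset.mem_coe,
      List.mem_toFinset, List.mem_filterMap]
    right
    exact ⟨some x, by simp [initSeg, List.mem_map]; exact ⟨n, hnj, hn⟩, rfl⟩
  have hsegy : ∀ y n, T n = some y → n < j → y ∈ L' := by
    intro y n hn hnj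
    apply hDL'
    simp only [hD, Finset.coe_insert, Set.mem_insert_iff, Finset.mem_coe,
      List.mem_toFinset, List.mem_filterMap]
    right
    exact ⟨some y, by simp [initSeg, List.mem_map]; exact ⟨n, hnj, hn⟩, rfl⟩
  -- the new text
  set T'' : ℕ → Option ℕ := fun n =>
    if n < j then T n else (if (n - j) ∈ L' then some (n - j) else none) with hT''
  have hcontent : content T'' = L' := by
    ext y
    constructor
    · rintro ⟨n, hn⟩
      simp only [hT''] at hn
      by_cases hnj : n < j
      · rw [if_pos hnj] at hn
        exact hsegy y n hn hnj
      · rw [if_neg hnj] at hn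
        by_cases hmem : (n - j) ∈ L'
        · rw [if_pos hmem] at hn
          obtain rfl : n - j = y := by injection hn
          exact hmem
        · rw [if_neg hmem] at hn; exact absurd hn (by simp)
    · intro hy
      refine ⟨j + y, ?_⟩
      simp [hT'', hy]
  have hagree : ∀ k, k ≤ j → initSeg T'' k = initSeg T k := by
    intro k hk
    simp only [initSeg, List.map_inj_left]
    intro n hn
    have : n < j := lt_of_lt_of_le (List.mem_range.mp hn) hk
    simp [hT'', this]
  have hmono := (hlearn L' hL'mem T'' hcontent).2 i j hij
  have hxi : x ∈ W (h (initSeg T'' i)) ∩ L' := by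
    rw [hagree i hij.le]; exact ⟨hx, hxL'⟩
  have := hmono hxi
  rw [hagree j le_rfl] at this
  exact this.1
end

section
/- For any total hypothesis sequence p and text T: if p satisfies Caut(p,T) and Ex(p,T) (converging to a correct index for L = content(T)), then no hypothesis of p is ever a proper superset of L; i.e., Caut ∧ Ex implies Caut_Tar. -/
theorem caut_ex_implies_cautTar (W : ℕ → Set ℕ) (T : ℕ → Option ℕ) (p : ℕ → ℕ)
    (hcaut : ∀ i j, W (p i) ⊂ W (p j) → i < j)
    (hex : ∃ n₀, ∀ n ≥ n₀, p n = p n₀ ∧ W (p n₀) = content T) :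
    ∀ i, ¬ (content T ⊂ W (p i)) := by
  intro i hsub
  obtain ⟨n₀, h⟩ := hex
  obtain ⟨hp, hW⟩ := h (max n₀ i) (le_max_left _ _)
  have : max n₀ i < i := hcaut _ i (by rw [hp, hW]; exact hsub)
  exact absurd (le_max_right n₀ i) (not_le.mpr this)
end

section
/- For any total hypothesis sequence p and text T: if p satisfies Caut_∞(p,T) and Ex(p,T) with L = content(T) infinite, then for all i, it is not the case that L ⊊ W_{p(i)}; that is, Caut_∞(p,T) ∧ Ex(p,T) ∧ L infinite → ∀ i, ¬(L ⊊ W_{p(i)}). -/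
theorem cautInf_ex_implies_cautTar (W : ℕ → Set ℕ) (T : ℕ → Option ℕ) (p : ℕ → ℕ)
    (hcautInf : ∀ i j, i < j → W (p j) ⊂ W (p i) → (W (p j)).Finite)
    (hex : ∃ n₀, ∀ n ≥ n₀, p n = p n₀ ∧ W (p n₀) = content T)
    (hinf : (content T).Infinite) :
    ∀ i, ¬ (content T ⊂ W (p i)) := by
  intro i hsub
  obtain ⟨n₀, h⟩ := hex
  set n := max (i+1) n₀ with hn
  obtain ⟨hp, hW⟩ := h n (le_max_right _ _)
  have hin : i < n := lt_of_lt_of_le (Nat.lt_succ_self i) (le_max_left _ _)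
  have : (W (p n)).Finite := hcautInf i n hin (by rw [hp, hW]; exact hsub)
  rw [hp, hW] at this
  exact hinf this
end
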